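/- Suppose that, regarding G as a transitive subgroup of the symmetric group S_d (via its left regular action on itself, identified with the action on the d conjugate roots of F), G is NOT contained in the alternating group A_d. Set G⁺ = G ∩ A_d and choose δ ∈ G with G = G⁺ ⊔ δG⁺. Then for every integer i ≥ 0, a_{K_j,i} = (1/det Γ_ξ) · ( Tr_{G⁺} − δ∘Tr_{G⁺} )( ξ^i · Σ_{τ∈K_j} ∂_τ(ξ) ), where Tr_{G⁺}(η) = Σ_{σ∈G⁺} σ(η). -/

import Mathlib

/-!
By Jacobi's formula `∂_τ` is a cofactor of the group matrix: `X_τ` occurs in `Γ` exactly at the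
positions `(τκ, κ)`, and the cofactors there all coincide because `Γ` is invariant under translating
rows and columns on the right by the same element. Hence `∂_τ(ξ) = adj(Γ_ξ)_{τ⁻¹,1}`.

An automorphism `σ` permutes the rows of `Γ_ξ` by left multiplication, so it multiplies cofactors
by the sign `ε(σ)` of that permutation. Together with the conjugation invariance of `K` this gives
`(adj(Γ_ξ) κ)_σ = ε(σ) σ⁻¹(S)` with `S = Σ_{τ∈K} ∂_τ(ξ)`, so that
`Σ_σ (σ⁻¹ξ)^i (Γ_ξ⁻¹ κ)_σ = det(Γ_ξ)⁻¹ Σ_σ ε(σ) σ(ξ^i S)`, and the signed sum `Σ_σ ε(σ) σ` is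
`Tr_{G⁺} − δ ∘ Tr_{G⁺}`. Since each `σ⁻¹ξ` is a root of `F`, the left-hand side satisfies the
recurrence of `F` in `i`; it agrees with `a_{K,i}` for `i < d`, hence for all `i`.
-/

open scoped BigOperators

/-- The group matrix `Γ = [X_{στ⁻¹}]` of a finite group `G`, over `ℚ[X_σ : σ ∈ G]`. -/
noncomputable def groupMatrix (G : Type*) [Group G] [Fintype G] [DecidableEq G] :
    Matrix G G (MvPolynomial G ℚ) :=
  Matrix.of fun σ τ : G => MvPolynomial.X (σ * τ⁻¹)

/-- `∂_τ = (1/|G|) ∂(det Γ)/∂X_τ`. -/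
noncomputable def groupDetDeriv (G : Type*) [Group G] [Fintype G] [DecidableEq G] (τ : G) :
    MvPolynomial G ℚ :=
  ((Fintype.card G : ℚ))⁻¹ • MvPolynomial.pderiv τ (groupMatrix G).det

open Matrix

namespace Derivation

variable {R A : Type*} [CommSemiring R] [CommRing A] [Algebra R A] (D : Derivation R A A)

theorem leibniz_finsetProd {ι : Type*} [DecidableEq ι] (s : Finset ι) (f : ι → A) :
    D (∏ i ∈ s, f i) = ∑ i ∈ s, (∏ j ∈ s.erase i, f j) * D (f i) := by
  induction s using Finset.induction_on with
  | empty => simp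
  | insert a s ha ih =>
    rw [Finset.prod_insert ha, D.leibniz, smul_eq_mul, smul_eq_mul, ih, Finset.mul_sum,
      Finset.sum_insert ha, Finset.erase_insert ha, add_comm]
    congr 1
    refine Finset.sum_congr rfl fun i hi => ?_
    rw [Finset.erase_insert_of_ne (ne_of_mem_of_not_mem hi ha).symm,
      Finset.prod_insert (fun h => ha (Finset.mem_of_mem_erase h)), mul_assoc]

theorem leibniz_det {n : Type*} [DecidableEq n] [Fintype n] (M : Matrix n n A) :
    D M.det = ∑ j, (M.updateCol j fun i => D (M i j)).det := by
  have hcol : ∀ (j : n) (c : n → A) (σ : Equiv.Perm n),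
      ∏ i, M.updateCol j c (σ i) i = c (σ j) * ∏ i ∈ Finset.univ.erase j, M (σ i) i := by
    intro j c σ
    rw [← Finset.mul_prod_erase _ _ (Finset.mem_univ j), updateCol_self]
    exact congrArg _ (Finset.prod_congr rfl fun i hi => updateCol_ne (Finset.ne_of_mem_erase hi))
  simp only [det_apply, map_sum, hcol, Units.smul_def, map_zsmul, leibniz_finsetProd,
    Finset.smul_sum]
  rw [Finset.sum_comm]
  simp only [mul_comm]

end Derivation

theorem Matrix.det_updateCol_single_one {n α : Type*} [DecidableEq n] [Fintype n] [CommRing α]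
    (A : Matrix n n α) (i j : n) :
    (A.updateCol j (Pi.single i 1)).det = A.adjugate j i := by
  rw [← det_transpose, ← updateRow_transpose, ← adjugate_apply, ← adjugate_transpose,
    transpose_apply]

theorem Matrix.adjugate_submatrix_perm_id {n α : Type*} [DecidableEq n] [Fintype n] [CommRing α]
    (A : Matrix n n α) (π : Equiv.Perm n) (i j : n) :
    (A.submatrix π id).adjugate i j = Equiv.Perm.sign π * A.adjugate i (π j) := by
  rw [adjugate_apply, adjugate_apply, ← Equiv.coe_refl, updateRow_submatrix_equiv, Equiv.coe_refl,
    det_permute]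
  rfl

section GroupMatrixOf

variable {G R : Type*} [Group G]

def groupMatrixOf (f : G → R) : Matrix G G R :=
  Matrix.of fun σ τ => f (σ * τ⁻¹)

theorem groupMatrix_eq_groupMatrixOf [Fintype G] [DecidableEq G] :
    groupMatrix G = groupMatrixOf MvPolynomial.X :=
  rfl

theorem groupMatrixOf_map {S : Type*} (f : G → R) (φ : R → S) :
    (groupMatrixOf f).map φ = groupMatrixOf (φ ∘ f) :=
  rfl

theorem groupMatrixOf_submatrix_mulRight (f : G → R) (g : G) :
    (groupMatrixOf f).submatrix (Equiv.mulRight g) (Equiv.mulRight g) = groupMatrixOf f := by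
  ext σ τ
  simp [groupMatrixOf, mul_assoc]

theorem groupMatrixOf_comp_mul_left (f : G → R) (g : G) :
    groupMatrixOf (fun ρ => f (g * ρ)) = (groupMatrixOf f).submatrix (Equiv.mulLeft g) id := by
  ext σ τ
  simp [groupMatrixOf, mul_assoc]

variable [CommRing R] [Fintype G] [DecidableEq G]

theorem adjugate_groupMatrixOf_apply (f : G → R) (ρ κ : G) :
    (groupMatrixOf f).adjugate ρ κ = (groupMatrixOf f).adjugate (ρ * κ⁻¹) 1 := by
  conv_lhs => rw [← groupMatrixOf_submatrix_mulRight f κ⁻¹, adjugate_submatrix_equiv_self]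
  simp

theorem pderiv_det_groupMatrix (τ : G) :
    MvPolynomial.pderiv τ (groupMatrix G).det
      = Fintype.card G • (groupMatrix G).adjugate τ⁻¹ 1 := by
  have hcol : ∀ κ : G, (fun ρ => MvPolynomial.pderiv τ (groupMatrix G ρ κ))
      = Pi.single (τ * κ) 1 := by
    intro κ
    funext ρ
    simp only [groupMatrix, of_apply, MvPolynomial.pderiv_X, Pi.single_apply, mul_inv_eq_iff_eq_mul]
  simp only [Derivation.leibniz_det, hcol, det_updateCol_single_one]
  rw [groupMatrix_eq_groupMatrixOf]
  simp [adjugate_groupMatrixOf_apply _ _ (τ * _)]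

theorem groupDetDeriv_eq (τ : G) : groupDetDeriv G τ = (groupMatrix G).adjugate τ⁻¹ 1 := by
  rw [groupDetDeriv, pderiv_det_groupMatrix, ← Nat.cast_smul_eq_nsmul ℚ, smul_smul,
    inv_mul_cancel₀ (Nat.cast_ne_zero.2 Fintype.card_ne_zero), one_smul]

theorem aeval_groupDetDeriv [Algebra ℚ R] (f : G → R) (τ : G) :
    MvPolynomial.aeval f (groupDetDeriv G τ) = (groupMatrixOf f).adjugate τ⁻¹ 1 := by
  have h := congrFun (congrFun ((MvPolynomial.aeval f).map_adjugate (groupMatrix G)) τ⁻¹) 1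
  rw [AlgHom.mapMatrix_apply, AlgHom.mapMatrix_apply, map_apply] at h
  rw [groupDetDeriv_eq, h, groupMatrix_eq_groupMatrixOf, groupMatrixOf_map,
    show ⇑(MvPolynomial.aeval f) ∘ MvPolynomial.X = f from funext (MvPolynomial.aeval_X f)]

end GroupMatrixOf

section

variable {G : Type*} [Group G] [Fintype G]

theorem sum_conjClass_conj {M : Type*} [AddCommMonoid M] (K : ConjClasses G)
    [DecidablePred (· ∈ K.carrier)] (h : G → M) (g : G) :
    ∑ τ, (if τ ∈ K.carrier then h (g * τ * g⁻¹) else 0)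
      = ∑ τ, if τ ∈ K.carrier then h τ else 0 := by
  refine Fintype.sum_equiv (MulAut.conj g).toEquiv _ _ fun τ => ?_
  have hmem : g * τ * g⁻¹ ∈ K.carrier ↔ τ ∈ K.carrier := by
    simp only [ConjClasses.mem_carrier_iff_mk_eq]
    have hconj : IsConj (g * τ * g⁻¹) τ := isConj_iff.2 ⟨g⁻¹, by group⟩
    rw [ConjClasses.mk_eq_mk_iff_isConj.2 hconj]
  change _ = if g * τ * g⁻¹ ∈ K.carrier then h (g * τ * g⁻¹) else 0
  simp only [hmem]

theorem sum_filter_sub_smul_sum_filter {M : Type*} [AddCommGroup M] [DistribMulAction G M]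
    (ε : G →* ℤˣ) {δ : G} (hδ : ε δ = -1) (x : M) :
    ∑ σ ∈ Finset.univ.filter (fun σ => ε σ = 1), σ • x
        - δ • ∑ σ ∈ Finset.univ.filter (fun σ => ε σ = 1), σ • x
      = ∑ σ, ε σ • σ • x := by
  have hodd : δ • ∑ σ ∈ Finset.univ.filter (fun σ => ε σ = 1), σ • x
      = ∑ σ ∈ Finset.univ.filter (fun σ => ¬ ε σ = 1), σ • x := by
    rw [Finset.smul_sum, Finset.sum_filter, Finset.sum_filter]
    refine Fintype.sum_equiv (Equiv.mulLeft δ) _ _ fun σ => ?_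
    rcases Int.units_eq_one_or (ε σ) with h | h <;> simp [h, hδ, mul_smul]
  rw [hodd, ← Finset.sum_filter_add_sum_filter_not Finset.univ (fun σ => ε σ = 1),
    sub_eq_add_neg, ← Finset.sum_neg_distrib]
  congr 1
  · refine Finset.sum_congr rfl fun σ hσ => ?_
    rw [(Finset.mem_filter.1 hσ).2, one_smul]
  · refine Finset.sum_congr rfl fun σ hσ => ?_
    rw [(Int.units_eq_one_or _).resolve_left (Finset.mem_filter.1 hσ).2, Units.neg_smul, one_smul]

variable [DecidableEq G]

variable (G) in
def mulLeftSign : G →* ℤˣ where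
  toFun σ := Equiv.Perm.sign (Equiv.mulLeft σ)
  map_one' := by simp
  map_mul' a b := by simp

theorem mulLeftSign_inv (σ : G) : mulLeftSign G σ⁻¹ = mulLeftSign G σ := by
  rw [map_inv, Int.units_inv_eq_self]

end

section Action

variable {G R : Type*} [Group G] [Fintype G] [DecidableEq G]

variable (G) in
abbrev orbitGroupMatrix [SMul G R] (x : R) : Matrix G G R :=
  groupMatrixOf fun ρ : G => ρ • x

theorem smul_adjugate_orbitGroupMatrix [CommRing R] [MulSemiringAction G R] (x : R)
    (g ρ κ : G) :
    g • (orbitGroupMatrix G x).adjugate ρ κ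
      = mulLeftSign G g • (orbitGroupMatrix G x).adjugate ρ (g * κ) := by
  have h := congrFun (congrFun ((MulSemiringAction.toRingHom G R g).map_adjugate
    (orbitGroupMatrix G x)) ρ) κ
  rw [RingHom.mapMatrix_apply, RingHom.mapMatrix_apply, map_apply, groupMatrixOf_map] at h
  have hcomp : ⇑(MulSemiringAction.toRingHom G R g) ∘ (· • x) = fun ρ => (g * ρ) • x :=
    funext fun ρ => (mul_smul g ρ x).symm
  rw [MulSemiringAction.toRingHom_apply, hcomp, groupMatrixOf_comp_mul_left (· • x) g,
    adjugate_submatrix_perm_id] at h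
  rw [h, Units.smul_def, zsmul_eq_mul]
  rfl

variable (x : R) (K : ConjClasses G) [DecidablePred (· ∈ K.carrier)]

/-- `∑_{τ ∈ K} ∂_τ` evaluated at `X_ρ = ρ • x` (see `aeval_groupDetDeriv`). -/
def conjClassCofactorSum [CommRing R] [MulSemiringAction G R] : R :=
  ∑ τ, if τ ∈ K.carrier then (orbitGroupMatrix G x).adjugate τ⁻¹ 1 else 0

theorem sum_adjugate_orbitGroupMatrix_conjClass [CommRing R] [MulSemiringAction G R] (σ : G) :
    ∑ τ, (if τ ∈ K.carrier then (orbitGroupMatrix G x).adjugate σ τ else 0)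
      = mulLeftSign G σ • σ⁻¹ • conjClassCofactorSum x K := by
  set A := orbitGroupMatrix G x
  have hS : σ⁻¹ • conjClassCofactorSum x K
      = mulLeftSign G σ •
          ∑ τ, if τ ∈ K.carrier then A.adjugate (τ⁻¹ * σ) 1 else 0 := by
    simp only [conjClassCofactorSum, Finset.smul_sum, smul_ite, smul_zero]
    refine Finset.sum_congr rfl fun τ _ => ?_
    rw [smul_adjugate_orbitGroupMatrix, mulLeftSign_inv, mul_one,
      adjugate_groupMatrixOf_apply _ τ⁻¹, inv_inv]
  rw [hS, smul_smul, Int.units_mul_self, one_smul,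
    ← sum_conjClass_conj K (fun τ => A.adjugate (τ⁻¹ * σ) 1) σ]
  refine Finset.sum_congr rfl fun τ _ => ?_
  rw [adjugate_groupMatrixOf_apply]
  congr 2
  group

theorem sum_inv_smul_mul_inv_mulVec_conjClass [Field R] [MulSemiringAction G R] (y : R) :
    ∑ σ : G,
        (σ⁻¹ • y) * ((orbitGroupMatrix G x)⁻¹ *ᵥ fun τ => if τ ∈ K.carrier then 1 else 0) σ
      = (orbitGroupMatrix G x).det⁻¹
          * ∑ σ : G, mulLeftSign G σ • σ • (y * conjClassCofactorSum x K) := by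
  have hcol : ∀ σ : G,
      ((orbitGroupMatrix G x)⁻¹ *ᵥ fun τ => if τ ∈ K.carrier then 1 else 0) σ
        = (orbitGroupMatrix G x).det⁻¹ *
            mulLeftSign G σ • σ⁻¹ • conjClassCofactorSum x K := by
    intro σ
    rw [inv_def, Ring.inverse_eq_inv', smul_mulVec, Pi.smul_apply, smul_eq_mul,
      ← sum_adjugate_orbitGroupMatrix_conjClass]
    simp [mulVec, dotProduct]
  simp_rw [hcol, Finset.mul_sum]
  refine Fintype.sum_equiv (Equiv.inv G) _ _ fun σ => ?_
  rw [Equiv.inv_apply, mulLeftSign_inv, smul_mul', mul_left_comm,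
    mul_smul_comm (mulLeftSign G σ)]

end Action

theorem LinearRecurrence.isSolution_sum_mul {R ι : Type*} [CommRing R] (E : LinearRecurrence R)
    (s : Finset ι) (u : ι → ℕ → R) (w : ι → R) (hu : ∀ i ∈ s, E.IsSolution (u i)) :
    E.IsSolution fun n => ∑ i ∈ s, u i n * w i := by
  intro n
  calc ∑ i ∈ s, u i (n + E.order) * w i
      = ∑ i ∈ s, ∑ j, E.coeffs j * u i (n + j) * w i :=
        Finset.sum_congr rfl fun i hi => by rw [hu i hi n, Finset.sum_mul]
    _ = ∑ j, E.coeffs j * ∑ i ∈ s, u i (n + j) * w i := by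
        rw [Finset.sum_comm]
        simp only [Finset.mul_sum, mul_assoc]

theorem LinearRecurrence.isSolution_pow_of_aeval_eq_zero {R : Type*} [CommRing R] {d : ℕ}
    (c : Fin d → ℤ) {ζ : R}
    (hζ : Polynomial.aeval ζ
      (Polynomial.X ^ d + ∑ j : Fin d, Polynomial.C (c j) * Polynomial.X ^ (j : ℕ)) = 0) :
    (⟨d, fun j => -(c j : R)⟩ : LinearRecurrence R).IsSolution (ζ ^ ·) := by
  intro n
  have hd : ζ ^ d = -∑ j : Fin d, (c j : R) * ζ ^ (j : ℕ) := by
    simpa [add_eq_zero_iff_eq_neg] using hζ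
  simp only [pow_add, hd, Finset.mul_sum, mul_neg, Finset.sum_neg_distrib, neg_mul]
  congr 1
  refine Finset.sum_congr rfl fun j _ => ?_
  ring

theorem stmt3_general (L : Type*) [Field L] [CharZero L] [FiniteDimensional ℚ L]
    [DecidableEq (L ≃ₐ[ℚ] L)]
    (d : ℕ)
    (c : Fin d → ℤ) (F : Polynomial ℤ)
    (hF : F = Polynomial.X ^ d + ∑ j : Fin d, Polynomial.C (c j) * Polynomial.X ^ (j : ℕ))
    (ξ : L) (hξ : Polynomial.aeval ξ F = 0)
    (δ : L ≃ₐ[ℚ] L) (hδ : Equiv.Perm.sign (Equiv.mulLeft δ) = -1)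
    (K : ConjClasses (L ≃ₐ[ℚ] L)) [DecidablePred (· ∈ K.carrier)]
    (a : ℕ → ℚ)
    (ha : ∀ i, a (i + d) = -∑ j : Fin d, (c j : ℚ) * a (i + (j : ℕ)))
    (hinit : ∀ i : Fin d, algebraMap ℚ L (a (i : ℕ)) =
      ∑ σ : L ≃ₐ[ℚ] L, (σ⁻¹ ξ) ^ (i : ℕ) *
        ((Matrix.of fun σ' τ' : L ≃ₐ[ℚ] L => (σ' * τ'⁻¹) ξ)⁻¹.mulVec
          (fun τ : L ≃ₐ[ℚ] L => if τ ∈ K.carrier then (1 : L) else 0)) σ) :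
    ∀ i : ℕ, algebraMap ℚ L (a i) =
      ((Matrix.of fun σ' τ' : L ≃ₐ[ℚ] L => (σ' * τ'⁻¹) ξ).det)⁻¹ *
        ((∑ σ ∈ Finset.univ.filter
              (fun σ : L ≃ₐ[ℚ] L => Equiv.Perm.sign (Equiv.mulLeft σ) = 1),
            σ (ξ ^ i * ∑ τ : L ≃ₐ[ℚ] L,
              if τ ∈ K.carrier then
                MvPolynomial.aeval (fun ρ : L ≃ₐ[ℚ] L => ρ ξ) (groupDetDeriv _ τ)
              else 0)) -
          δ (∑ σ ∈ Finset.univ.filter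
              (fun σ : L ≃ₐ[ℚ] L => Equiv.Perm.sign (Equiv.mulLeft σ) = 1),
            σ (ξ ^ i * ∑ τ : L ≃ₐ[ℚ] L,
              if τ ∈ K.carrier then
                MvPolynomial.aeval (fun ρ : L ≃ₐ[ℚ] L => ρ ξ) (groupDetDeriv _ τ)
              else 0))) := by
  let E : LinearRecurrence L := ⟨d, fun j => -(c j : L)⟩
  set w := (Matrix.of fun σ' τ' : L ≃ₐ[ℚ] L => (σ' * τ'⁻¹) ξ)⁻¹.mulVec
    (fun τ : L ≃ₐ[ℚ] L => if τ ∈ K.carrier then (1 : L) else 0)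
  have hsol_a : E.IsSolution fun n => algebraMap ℚ L (a n) := fun n => by
    simp [E, ha n]
  have hsol_sum : E.IsSolution fun n => ∑ σ : L ≃ₐ[ℚ] L, (σ⁻¹ ξ) ^ n * w σ :=
    E.isSolution_sum_mul _ _ _ fun σ _ =>
      LinearRecurrence.isSolution_pow_of_aeval_eq_zero c <| hF ▸
        (Polynomial.aeval_algHom_apply
          (((σ⁻¹ : L ≃ₐ[ℚ] L) : L →ₐ[ℚ] L).restrictScalars ℤ) ξ F).trans
          (by rw [hξ, map_zero])
  have heq := (E.eq_iff_eqOn_range_order _ _ hsol_a hsol_sum).2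
    fun n hn => hinit ⟨n, Finset.mem_range.1 hn⟩
  have hS : (∑ τ : L ≃ₐ[ℚ] L, if τ ∈ K.carrier then
      MvPolynomial.aeval (fun ρ : L ≃ₐ[ℚ] L => ρ ξ) (groupDetDeriv _ τ) else 0)
      = conjClassCofactorSum ξ K := by
    simp only [aeval_groupDetDeriv]
    rfl
  intro n
  rw [congrFun heq n, hS]
  simp only [← map_pow]
  refine (sum_inv_smul_mul_inv_mulVec_conjClass ξ K (ξ ^ n)).trans ?_
  rw [← sum_filter_sub_smul_sum_filter (mulLeftSign _) hδ]
  rfl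

/-- Suppose that `G = Gal(L/ℚ)`, viewed as a permutation group via its left regular
action, is *not* contained in the alternating group, and choose `δ ∈ G` acting as an odd
permutation (so that `G = G⁺ ⊔ δG⁺`, where `G⁺` consists of the elements acting as even
permutations).  Then for every `i ≥ 0`,
`a_{K,i} = (1/det Γ_ξ) (Tr_{G⁺} - δ ∘ Tr_{G⁺})(ξ^i Σ_{τ∈K} ∂_τ(ξ))`, where
`(a_{K,i})_i ∈ RS(F,ℚ)` is the sequence whose first `d` terms are the column of
`P Γ_ξ⁻¹ κ` corresponding to the conjugacy class `K`, and `Tr_{G⁺}(η) = Σ_{σ∈G⁺} σ(η)`. -/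
theorem stmt3 (L : Type*) [Field L] [CharZero L] [FiniteDimensional ℚ L] [IsGalois ℚ L]
    [DecidableEq (L ≃ₐ[ℚ] L)]
    (d : ℕ) (hd : 0 < d) (hdeg : Module.finrank ℚ L = d)
    (c : Fin d → ℤ) (F : Polynomial ℤ)
    (hF : F = Polynomial.X ^ d + ∑ j : Fin d, Polynomial.C (c j) * Polynomial.X ^ (j : ℕ))
    (hFirr : Irreducible (F.map (Int.castRingHom ℚ)))
    (ξ : L) (hξ : Polynomial.aeval ξ F = 0)
    (hNB : ∃ b : Module.Basis (L ≃ₐ[ℚ] L) ℚ L, ∀ σ : L ≃ₐ[ℚ] L, b σ = σ ξ)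
    (δ : L ≃ₐ[ℚ] L) (hδ : Equiv.Perm.sign (Equiv.mulLeft δ) = -1)
    (K : ConjClasses (L ≃ₐ[ℚ] L)) [DecidablePred (· ∈ K.carrier)]
    (a : ℕ → ℚ)
    (ha : ∀ i, a (i + d) = -∑ j : Fin d, (c j : ℚ) * a (i + (j : ℕ)))
    (hinit : ∀ i : Fin d, algebraMap ℚ L (a (i : ℕ)) =
      ∑ σ : L ≃ₐ[ℚ] L, (σ⁻¹ ξ) ^ (i : ℕ) *
        ((Matrix.of fun σ' τ' : L ≃ₐ[ℚ] L => (σ' * τ'⁻¹) ξ)⁻¹.mulVec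
          (fun τ : L ≃ₐ[ℚ] L => if τ ∈ K.carrier then (1 : L) else 0)) σ) :
    ∀ i : ℕ, algebraMap ℚ L (a i) =
      ((Matrix.of fun σ' τ' : L ≃ₐ[ℚ] L => (σ' * τ'⁻¹) ξ).det)⁻¹ *
        ((∑ σ ∈ Finset.univ.filter
              (fun σ : L ≃ₐ[ℚ] L => Equiv.Perm.sign (Equiv.mulLeft σ) = 1),
            σ (ξ ^ i * ∑ τ : L ≃ₐ[ℚ] L,
              if τ ∈ K.carrier then
                MvPolynomial.aeval (fun ρ : L ≃ₐ[ℚ] L => ρ ξ) (groupDetDeriv _ τ)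
              else 0)) -
          δ (∑ σ ∈ Finset.univ.filter
              (fun σ : L ≃ₐ[ℚ] L => Equiv.Perm.sign (Equiv.mulLeft σ) = 1),
            σ (ξ ^ i * ∑ τ : L ≃ₐ[ℚ] L,
              if τ ∈ K.carrier then
                MvPolynomial.aeval (fun ρ : L ≃ₐ[ℚ] L => ρ ξ) (groupDetDeriv _ τ)
              else 0))) :=
  stmt3_general L d c F hF ξ hξ δ hδ K a ha hinit
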